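/- Let (X, d) be a metric space with a Borel probability measure μ and let f : X → X be an invertible Borel measurable μ-preserving map whose inverse is also Borel measurable and μ-preserving. If every f-invariant φ ∈ L²(μ) (φ∘f = φ μ-a.e.) that is both W^ss-saturated and W^su-saturated is constant μ-a.e., then f is ergodic. -/

import Mathlib

open MeasureTheory Filter Topology
open scoped ENNReal

/-- The strong stable set of `x` under `f`. -/
def Wss {X : Type*} [MetricSpace X] (f : X → X) (x : X) : Set X :=
  {y | Tendsto (fun n : ℕ => dist (f^[n] x) (f^[n] y)) atTop (nhds 0)}

/-- `φ` is saturated with respect to the partition `W`. -/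
def Saturated {X : Type*} [MeasurableSpace X] (μ : Measure X)
    (W : X → Set X) (φ : X → ℝ) : Prop :=
  ∃ G : Set X, MeasurableSet G ∧ μ G = 1 ∧
    ∀ x ∈ G, ∀ y ∈ G, y ∈ W x → φ x = φ y

/-- `f` is ergodic: every measurable a.e.-invariant function is constant a.e. -/
def ErgodicMap {X : Type*} [MeasurableSpace X] (μ : Measure X) (f : X → X) : Prop :=
  ∀ φ : X → ℝ, Measurable φ → φ ∘ f =ᵐ[μ] φ → ∃ c : ℝ, φ =ᵐ[μ] fun _ => c

/-! Hopf's argument. By von Neumann's mean ergodic theorem the Birkhoff averages of `w ∈ L²(μ)`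
under `f` converge in `L²` to the orthogonal projection `P w` onto the `f`-invariant functions,
and so do those under `f⁻¹`, whose invariant functions are the same; along subsequences they
converge a.e. For uniformly continuous `g`, forward averages at two points of a stable set are
asymptotic, and so are backward averages along an unstable set, so `P g` is invariant and
bisaturated, hence constant. Uniformly continuous functions are dense in `L²` and `P` is
continuous, so `P` maps `L²` into the constants, and an invariant `φ ∈ L²` equals `P φ`.
Arbitrary measurable invariant `φ` are handled through the bounded function `arctan ∘ φ`. -/

open Metric

theorem norm_smul_sub_indicator_le {X E : Type*} [NormedAddCommGroup E] [NormedSpace ℝ E]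
    {t : X → ℝ} (ht0 : ∀ x, 0 ≤ t x) (ht1 : ∀ x, t x ≤ 1)
    {F s U : Set X} (hFs : F ⊆ s) (htF : ∀ x ∈ F, t x = 1) (htU : ∀ x ∉ U, t x = 0) (c : E)
    (x : X) :
    ‖t x • c - s.indicator (fun _ => c) x‖ ≤ ‖((s \ F) ∪ (U \ F)).indicator (fun _ => c) x‖ := by
  by_cases hxF : x ∈ F
  · simp [htF x hxF, hFs hxF, hxF]
  by_cases hxs : x ∈ s
  · rw [Set.indicator_of_mem hxs,
      Set.indicator_of_mem (Set.mem_union_left _ (Set.mem_sdiff_of_mem hxs hxF)),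
      show t x • c - c = (t x - 1) • c by rw [sub_smul, one_smul], norm_smul]
    refine mul_le_of_le_one_left (norm_nonneg c) ?_
    rw [Real.norm_eq_abs, abs_sub_comm, abs_of_nonneg (by linarith [ht1 x])]
    linarith [ht0 x]
  by_cases hxU : x ∈ U
  · rw [Set.indicator_of_notMem hxs,
      Set.indicator_of_mem (Set.mem_union_right _ (Set.mem_sdiff_of_mem hxU hxF)), sub_zero,
      norm_smul]
    exact mul_le_of_le_one_left (norm_nonneg c) (by simpa [abs_of_nonneg (ht0 x)] using ht1 x)
  · simp [htU x hxU, hxs]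

section Density

variable {X E : Type*} [PseudoMetricSpace X] [MeasurableSpace X] [BorelSpace X]
  [NormedAddCommGroup E] [NormedSpace ℝ E] {μ : Measure X} [IsFiniteMeasure μ] {p : ℝ≥0∞}

theorem exists_uniformContinuous_eLpNorm_sub_indicator_le (hp : p ≠ ∞) (c : E) {s : Set X}
    (hs : MeasurableSet s) {ε : ℝ≥0∞} (hε : ε ≠ 0) :
    ∃ g : X → E, eLpNorm (g - s.indicator fun _ => c) p μ ≤ ε ∧
      UniformContinuous g ∧ MemLp g p μ := by
  obtain ⟨η, hη, hsmall⟩ := exists_eLpNorm_indicator_le (μ := μ) hp c hε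
  have hη2 : (η / 2 : ℝ≥0∞) ≠ 0 := by simpa using hη.ne'
  obtain ⟨F, hFs, hF, hsF⟩ := hs.exists_isClosed_sdiff_lt (measure_ne_top μ s) hη2
  have hthick := tendsto_measure_thickening_of_isClosed (μ := μ)
    ⟨1, one_pos, measure_ne_top μ _⟩ hF
  obtain ⟨δ, hδF, hδ⟩ : ∃ δ, μ (thickening δ F) < μ F + η / 2 ∧ 0 < δ :=
    ((hthick.eventually_lt_const (ENNReal.lt_add_right (measure_ne_top μ F) hη2)).and
      self_mem_nhdsWithin).exists
  set t := thickenedIndicator hδ F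
  have ht1 : ∀ x, (t x : ℝ) ≤ 1 := fun x => by exact_mod_cast thickenedIndicator_le_one hδ F x
  set D := (s \ F) ∪ (thickening δ F \ F)
  have hpt := norm_smul_sub_indicator_le (U := thickening δ F) (fun x => (t x).2) ht1 hFs
    (fun x hx => by simp [t, thickenedIndicator_one hδ F hx])
    (fun x hx => by simp [t, thickenedIndicator_zero hδ F hx]) c
  have hμD : μ D ≤ η := by
    calc μ D ≤ μ (s \ F) + μ (thickening δ F \ F) := measure_union_le _ _
      _ ≤ η / 2 + η / 2 := by
          refine add_le_add hsF.le ?_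
          rw [measure_sdiff (self_subset_thickening hδ F) hF.measurableSet.nullMeasurableSet
            (measure_ne_top μ F), tsub_le_iff_left]
          exact hδF.le
      _ = η := ENNReal.add_halves _
  have hcont : UniformContinuous fun x => (t x : ℝ) :=
    NNReal.isUniformEmbedding_coe.uniformContinuous.comp
      (lipschitzWith_thickenedIndicator hδ F).uniformContinuous
  refine ⟨fun x => (t x : ℝ) • c, (eLpNorm_mono hpt).trans (hsmall D hμD), ?_, ?_⟩
  · exact ((ContinuousLinearMap.smulRight (1 : ℝ →L[ℝ] ℝ) c).uniformContinuous).comp hcont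
  · refine MemLp.of_bound (hcont.continuous.aestronglyMeasurable.smul_const c) ‖c‖
      (ae_of_all _ fun x => ?_)
    rw [norm_smul]
    exact mul_le_of_le_one_left (norm_nonneg c) (by simpa using ht1 x)

theorem MeasureTheory.MemLp.exists_uniformContinuous_eLpNorm_sub_le (hp : p ≠ ∞) {φ : X → E}
    (hφ : MemLp φ p μ) {ε : ℝ≥0∞} (hε : ε ≠ 0) :
    ∃ g : X → E, eLpNorm (φ - g) p μ ≤ ε ∧ UniformContinuous g ∧ MemLp g p μ := by
  refine hφ.induction_dense hp (fun g => UniformContinuous g ∧ MemLp g p μ) ?_ ?_ ?_ hε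
  · intro c s hs _ ε hε
    exact exists_uniformContinuous_eLpNorm_sub_indicator_le hp c hs hε
  · intro f g hf hg
    exact ⟨hf.1.add hg.1, hf.2.add hg.2⟩
  · intro f hf
    exact hf.2.aestronglyMeasurable

theorem MeasureTheory.Lp.dense_uniformContinuous [Fact (1 ≤ p)] (hp : p ≠ ∞) :
    Dense {w : Lp E p μ | ∃ g : X → E, UniformContinuous g ∧ ⇑w =ᵐ[μ] g} := by
  refine Metric.dense_iff.2 fun w r hr => ?_
  obtain ⟨g, hwg, hg, hgL⟩ := (Lp.memLp w).exists_uniformContinuous_eLpNorm_sub_le hp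
    (ENNReal.ofReal_pos.2 (half_pos hr)).ne'
  refine ⟨hgL.toLp g, ?_, g, hg, hgL.coeFn_toLp⟩
  rw [Metric.mem_ball, ← edist_lt_ofReal, edist_comm, Lp.edist_def,
    eLpNorm_congr_ae (EventuallyEq.rfl.sub hgL.coeFn_toLp)]
  exact hwg.trans_lt (ENNReal.ofReal_lt_ofReal_iff hr |>.2 (half_lt_self hr))

end Density

theorem tendsto_birkhoffAverage_sub_of_mem_Wss {X E : Type*} [MetricSpace X]
    [NormedAddCommGroup E] [NormedSpace ℝ E] {f : X → X} {g : X → E} (hg : UniformContinuous g)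
    {x y : X} (hy : y ∈ Wss f x) :
    Tendsto (fun n => birkhoffAverage ℝ f g n x - birkhoffAverage ℝ f g n y) atTop (𝓝 0) := by
  have hdist := tendsto_uniformity_iff_dist_tendsto_zero.1
    (Tendsto.comp hg ((tendsto_uniformity_iff_dist_tendsto_zero
      (f := fun n => (f^[n] x, f^[n] y))).2 hy))
  have hdiff : Tendsto (fun n => g (f^[n] x) - g (f^[n] y)) atTop (𝓝 0) :=
    tendsto_zero_iff_norm_tendsto_zero.2 <| by
      simpa only [dist_eq_norm, Function.comp_apply] using hdist
  refine hdiff.cesaro_smul.congr fun n => ?_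
  simp only [birkhoffAverage, birkhoffSum, Finset.sum_sub_distrib, smul_sub]

section Saturation

variable {X : Type*} [MeasurableSpace X] {μ : Measure X} [IsProbabilityMeasure μ]
  {W : X → Set X} {φ : X → ℝ}

theorem saturated_of_ae {P : X → Prop} (hP : ∀ᵐ x ∂μ, P x)
    (h : ∀ x, P x → ∀ y, P y → y ∈ W x → φ x = φ y) : Saturated μ W φ := by
  have hnull : μ (toMeasurable μ {x | ¬P x}) = 0 := by rw [measure_toMeasurable]; exact hP
  refine ⟨(toMeasurable μ {x | ¬P x})ᶜ, (measurableSet_toMeasurable _ _).compl, ?_, ?_⟩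
  · rw [prob_compl_eq_one_sub (measurableSet_toMeasurable _ _), hnull, tsub_zero]
  · have hG : ∀ x ∈ (toMeasurable μ {x | ¬P x})ᶜ, P x := fun x hx =>
      not_not.1 fun hPx => hx (subset_toMeasurable _ _ hPx)
    exact fun x hx y hy => h x (hG x hx) y (hG y hy)

theorem saturated_of_tendsto {F : ℕ → X → ℝ}
    (hF : ∀ᵐ x ∂μ, Tendsto (F · x) atTop (𝓝 (φ x)))
    (hW : ∀ x, ∀ y ∈ W x, Tendsto (fun n => F n x - F n y) atTop (𝓝 0)) :
    Saturated μ W φ :=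
  saturated_of_ae hF fun x hx y hy hxy =>
    tendsto_nhds_unique hx (by simpa using hy.add (hW x y hxy))

end Saturation

theorem Submodule.starProjection_congr {𝕜 E : Type*} [RCLike 𝕜] [NormedAddCommGroup E]
    [InnerProductSpace 𝕜 E] {K₁ K₂ : Submodule 𝕜 E} [K₁.HasOrthogonalProjection]
    [K₂.HasOrthogonalProjection] (h : K₁ = K₂) : K₁.starProjection = K₂.starProjection := by
  subst h
  rfl

section Koopman

variable {X : Type*} [MeasurableSpace X] {μ : Measure X} {f : X → X}

noncomputable def koopman (hf : MeasurePreserving f μ μ) : Lp ℝ 2 μ →L[ℝ] Lp ℝ 2 μ :=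
  (Lp.compMeasurePreservingₗᵢ ℝ f hf).toContinuousLinearMap

-- An `abbrev`, so that Mathlib's `HasOrthogonalProjection` instance for `eqLocus` applies.
noncomputable abbrev invariantL2 (hf : MeasurePreserving f μ μ) : Submodule ℝ (Lp ℝ 2 μ) :=
  (koopman hf).eqLocus (1 : Lp ℝ 2 μ →L[ℝ] Lp ℝ 2 μ)

theorem norm_koopman_le (hf : MeasurePreserving f μ μ) : ‖koopman hf‖ ≤ 1 :=
  LinearIsometry.norm_toContinuousLinearMap_le _

theorem coeFn_koopman (hf : MeasurePreserving f μ μ) (v : Lp ℝ 2 μ) :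
    ⇑(koopman hf v) =ᵐ[μ] ⇑v ∘ f :=
  Lp.coeFn_compMeasurePreserving v hf

theorem mem_invariantL2_iff (hf : MeasurePreserving f μ μ) {v : Lp ℝ 2 μ} :
    v ∈ invariantL2 hf ↔ ⇑v ∘ f =ᵐ[μ] ⇑v := by
  change koopman hf v = v ↔ _
  rw [Lp.ext_iff]
  exact ⟨(coeFn_koopman hf v).symm.trans, (coeFn_koopman hf v).trans⟩

theorem MeasureTheory.MemLp.toLp_mem_invariantL2 (hf : MeasurePreserving f μ μ) {φ : X → ℝ}
    (hφ : MemLp φ 2 μ) (hinv : φ ∘ f =ᵐ[μ] φ) : hφ.toLp φ ∈ invariantL2 hf :=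
  (mem_invariantL2_iff hf).2 <|
    (hf.quasiMeasurePreserving.ae_eq_comp hφ.coeFn_toLp).trans (hinv.trans hφ.coeFn_toLp.symm)

theorem invariantL2_le_of_rightInverse (hf : MeasurePreserving f μ μ) {g : X → X}
    (hg : MeasurePreserving g μ μ) (hgf : Function.RightInverse g f) :
    invariantL2 hf ≤ invariantL2 hg := by
  intro v hv
  rw [mem_invariantL2_iff] at hv ⊢
  have := hg.quasiMeasurePreserving.ae_eq_comp hv
  rw [Function.comp_assoc, hgf.comp_eq_id, Function.comp_id] at this
  exact this.symm

theorem coeFn_birkhoffAverage_koopman (hf : MeasurePreserving f μ μ) {w : Lp ℝ 2 μ}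
    {g : X → ℝ} (hwg : ⇑w =ᵐ[μ] g) (n : ℕ) :
    ⇑(birkhoffAverage ℝ (koopman hf) id n w) =ᵐ[μ] birkhoffAverage ℝ f g n := by
  have hiter : ∀ k, ⇑((koopman hf)^[k] w) =ᵐ[μ] g ∘ f^[k] := by
    intro k
    rw [show ⇑(koopman hf) = Lp.compMeasurePreserving f hf from rfl,
      Lp.compMeasurePreserving_iterate]
    exact (Lp.coeFn_compMeasurePreserving _ _).trans
      ((hf.iterate k).quasiMeasurePreserving.ae_eq_comp hwg)
  have hsum : ∀ n, ⇑(birkhoffSum (koopman hf) id n w) =ᵐ[μ] birkhoffSum f g n := by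
    intro n
    induction n with
    | zero => simpa using Lp.coeFn_zero ℝ 2 μ
    | succ n ih =>
      filter_upwards [Lp.coeFn_add (birkhoffSum (koopman hf) id n w) ((koopman hf)^[n] w), ih,
        hiter n] with x hadd hx hxn
      simp only [birkhoffSum_succ, id, hadd, Pi.add_apply, hx, hxn, Function.comp_apply]
  filter_upwards [Lp.coeFn_smul (n : ℝ)⁻¹ (birkhoffSum (koopman hf) id n w), hsum n]
    with x hsmul hx
  simp only [birkhoffAverage, hsmul, Pi.smul_apply, hx]

end Koopman

theorem saturated_starProjection_invariantL2 {X : Type*} [MetricSpace X]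
    [MeasurableSpace X] {μ : Measure X} [IsProbabilityMeasure μ] {f : X → X}
    (hf : MeasurePreserving f μ μ) {w : Lp ℝ 2 μ} {g : X → ℝ} (hg : UniformContinuous g)
    (hwg : ⇑w =ᵐ[μ] g) :
    Saturated μ (Wss f) ⇑((invariantL2 hf).starProjection w) := by
  have hmean := (koopman hf).tendsto_birkhoffAverage_orthogonalProjection (norm_koopman_le hf) w
  obtain ⟨ns, hns, hae⟩ := (tendstoInMeasure_of_tendsto_Lp hmean).exists_seq_tendsto_ae
  refine saturated_of_tendsto (F := fun i => birkhoffAverage ℝ f g (ns i)) ?_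
    fun x y hy => (tendsto_birkhoffAverage_sub_of_mem_Wss hg hy).comp hns.tendsto_atTop
  filter_upwards [hae, ae_all_iff.2 (coeFn_birkhoffAverage_koopman hf hwg)] with x hx hxn
  simp only [hxn] at hx
  exact hx

theorem Filter.EventuallyEq.exists_eq_const_of_injective {X α β : Type*} {l : Filter X}
    [l.NeBot] {φ : X → α} {u : α → β} (hu : Function.Injective u) {b : β}
    (h : u ∘ φ =ᶠ[l] fun _ => b) : ∃ a, φ =ᶠ[l] fun _ => a := by
  obtain ⟨x₀, hx₀⟩ := h.exists
  exact ⟨φ x₀, h.mono fun x hx => hu (hx.trans hx₀.symm)⟩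

theorem ergodicMap_of_forall_memLp {X : Type*} [MeasurableSpace X] {μ : Measure X}
    [IsFiniteMeasure μ] [NeZero μ] {f : X → X} {p : ℝ≥0∞}
    (h : ∀ φ : X → ℝ, Measurable φ → MemLp φ p μ → φ ∘ f =ᵐ[μ] φ →
      ∃ c : ℝ, φ =ᵐ[μ] fun _ => c) :
    ErgodicMap μ f := by
  intro φ hφ hinv
  have hbound : ∀ x, ‖Real.arctan (φ x)‖ ≤ Real.pi / 2 := fun x =>
    abs_le.2 ⟨(Real.arctan_mem_Ioo _).1.le, (Real.arctan_mem_Ioo _).2.le⟩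
  obtain ⟨c, hc⟩ := h (Real.arctan ∘ φ) (Real.measurable_arctan.comp hφ)
    (MemLp.of_bound (Real.measurable_arctan.comp hφ).aestronglyMeasurable _ (ae_of_all _ hbound))
    (hinv.fun_comp Real.arctan)
  exact hc.exists_eq_const_of_injective Real.arctan_injective

/-- If every `f`-invariant `φ ∈ L²(μ)` that is both `W^ss`- and `W^su`-saturated is
constant a.e., then `f` is ergodic. -/
theorem ergodic_of_invariant_bisaturated_const {X : Type*} [MetricSpace X] [MeasurableSpace X]
    [BorelSpace X] (μ : Measure X) [IsProbabilityMeasure μ]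
    (f finv : X → X) (hf : MeasurePreserving f μ μ) (hfinv : MeasurePreserving finv μ μ)
    (hli : Function.LeftInverse finv f) (hri : Function.RightInverse finv f)
    (hyp : ∀ φ : X → ℝ, Measurable φ → MemLp φ 2 μ → φ ∘ f =ᵐ[μ] φ →
      Saturated μ (Wss f) φ → Saturated μ (Wss finv) φ → ∃ c : ℝ, φ =ᵐ[μ] fun _ => c) :
    ErgodicMap μ f := by
  set P := (invariantL2 hf).starProjection
  have hfix : invariantL2 hfinv = invariantL2 hf := le_antisymm
    (invariantL2_le_of_rightInverse hfinv hf hli) (invariantL2_le_of_rightInverse hf hfinv hri)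
  have hconst : ∀ w, P w ∈ LinearMap.range (Lp.constₗ 2 μ ℝ) := by
    refine (Lp.dense_uniformContinuous (μ := μ) (p := 2) ENNReal.ofNat_ne_top).induction ?_
      ((Submodule.closed_of_finiteDimensional _).preimage P.continuous)
    rintro w ⟨g, hg, hwg⟩
    have hsu := saturated_starProjection_invariantL2 hfinv hg hwg
    rw [Submodule.starProjection_congr hfix] at hsu
    obtain ⟨c, hc⟩ := hyp _ (Lp.stronglyMeasurable _).measurable (Lp.memLp _)
      ((mem_invariantL2_iff hf).1 (Submodule.starProjection_apply_mem _ w))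
      (saturated_starProjection_invariantL2 hf hg hwg) hsu
    exact ⟨c, Lp.ext ((Lp.coeFn_const ..).trans hc.symm)⟩
  refine ergodicMap_of_forall_memLp (p := 2) fun φ _ hφ hinv => ?_
  obtain ⟨c, hc⟩ := hconst (hφ.toLp φ)
  rw [Submodule.starProjection_eq_self_iff.2 (hφ.toLp_mem_invariantL2 hf hinv)] at hc
  exact ⟨c, hφ.coeFn_toLp.symm.trans (hc ▸ Lp.coeFn_const 2 μ c)⟩
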